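/- arXiv:1003.3972 — 3 statements merged into one kernel-verified Lean document; each statement's English description precedes it below -/
import Mathlib

section
/- Let M be a finitely generated module over a Noetherian local ring R. There exists a unique filtration D_0 ⊂ D_1 ⊂ … ⊂ D_t = M of submodules such that D_0 = H^0_m(M), and for each i ≥ 1, D_{i-1} is the largest submodule of D_i with dim D_{i-1} < dim D_i. -/
open IsLocalRing

/-- Krull dimension of a module: the Krull dimension of its support in `Spec R`. -/
noncomputable def mDim (R : Type*) [CommRing R] (M : Type*) [AddCommGroup M] [Module R M] :
    WithBot (WithTop ℕ) :=
  Order.krullDim (Module.support R M)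

/-- Length of a module, as the Krull dimension of its lattice of submodules. -/
noncomputable def eLength (R : Type*) [Ring R] (M : Type*) [AddCommGroup M] [Module R M] : ℕ∞ :=
  (Order.krullDim (Submodule R M)).unbotD 0

/-- A system of parameters of `M`: `n = dim M` elements of the maximal ideal such that the
quotient of `M` by them has finite length. -/
def IsSOP (R : Type*) [CommRing R] [IsLocalRing R] (M : Type*) [AddCommGroup M] [Module R M]
    (n : ℕ) (x : Fin n → R) : Prop :=
  mDim R M = (n : WithBot (WithTop ℕ)) ∧ (∀ j, x j ∈ maximalIdeal R) ∧
    IsFiniteLength R (M ⧸ (Ideal.span (Set.range x) • (⊤ : Submodule R M)))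

/-- A good system of parameters of `M` with respect to the filtration `F 0 ⊆ F 1 ⊆ ... ⊆ F t = M`:
a system of parameters `x` such that `(x_{d_i+1}, …, x_d) M ∩ F i = 0` where `d_i = dim (F i)`
(indices are zero-based, so the condition is over `j` with `d_i ≤ j`). -/
def IsGoodSOP (R : Type*) [CommRing R] [IsLocalRing R] (M : Type*) [AddCommGroup M] [Module R M]
    (t : ℕ) (F : ℕ → Submodule R M) (n : ℕ) (x : Fin n → R) : Prop :=
  IsSOP R M n x ∧ ∀ i < t,
    (Ideal.span (x '' {j | mDim R ↥(F i) ≤ (j.val : WithBot (WithTop ℕ))}) • (⊤ : Submodule R M)) ⊓ F i = ⊥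

/-- `D 0 ⊆ D 1 ⊆ ... ⊆ D t = M` is the dimension filtration of `M`: `D 0 = H^0_m(M)`,
dimensions strictly increase, and each `D i` is the largest submodule of `D (i+1)` of strictly
smaller dimension. -/
def IsDimFiltration (R : Type*) [CommRing R] [IsLocalRing R] (M : Type*) [AddCommGroup M]
    [Module R M] (t : ℕ) (D : ℕ → Submodule R M) : Prop :=
  D t = ⊤ ∧
  (∀ x : M, x ∈ D 0 ↔ ∃ n : ℕ, ∀ r ∈ (maximalIdeal R) ^ n, r • x = 0) ∧
  (∀ i < t, mDim R ↥(D i) < mDim R ↥(D (i + 1))) ∧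
  (∀ i < t, ∀ N : Submodule R M, N ≤ D (i + 1) → mDim R ↥N < mDim R ↥(D (i + 1)) → N ≤ D i)

/-- A filtration `F 0 ⊆ F 1 ⊆ ... ⊆ F t = M` satisfying the dimension condition:
strictly increasing dimensions. -/
def DimCond (R : Type*) [CommRing R] (M : Type*) [AddCommGroup M] [Module R M]
    (t : ℕ) (F : ℕ → Submodule R M) : Prop :=
  F t = ⊤ ∧ (∀ i < t, F i ≤ F (i + 1)) ∧ ∀ i < t, mDim R ↥(F i) < mDim R ↥(F (i + 1))

/-- A ring is catenary if any two saturated chains of primes with the same endpoints have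
the same length. -/
def IsCatenary (R : Type*) [CommRing R] : Prop :=
  ∀ c₁ c₂ : LTSeries (PrimeSpectrum R), c₁.head = c₂.head → c₁.last = c₂.last →
    (∀ i : Fin c₁.length, ¬ ∃ q, c₁ i.castSucc < q ∧ q < c₁ i.succ) →
    (∀ i : Fin c₂.length, ¬ ∃ q, c₂ i.castSucc < q ∧ q < c₂ i.succ) →
    c₁.length = c₂.length

/-- A finitely generated module over a Noetherian local ring is Cohen-Macaulay if it is zero or
has a system of parameters which is a regular sequence on it. -/
def IsCMMod (R : Type*) [CommRing R] [IsLocalRing R] (M : Type*) [AddCommGroup M]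
    [Module R M] : Prop :=
  Subsingleton M ∨
    ∃ (n : ℕ) (x : Fin n → R), IsSOP R M n x ∧ RingTheory.Sequence.IsRegular M (List.ofFn x)

/-- A module is sequentially Cohen-Macaulay if every quotient of consecutive terms of its
dimension filtration is Cohen-Macaulay. -/
def IsSeqCM (R : Type*) [CommRing R] [IsLocalRing R] (M : Type*) [AddCommGroup M]
    [Module R M] : Prop :=
  ∃ (t : ℕ) (D : ℕ → Submodule R M), IsDimFiltration R M t D ∧
    ∀ i, 1 ≤ i → i ≤ t → IsCMMod R (↥(D i) ⧸ (D (i - 1)).comap (D i).subtype)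

/-!
Submodules of dimension `< d` are closed under sums, since the support of `N₁ + N₂` lies in the
union of the supports; so a Noetherian module has a largest one, `M_{<d}`. Starting from `M` and
repeatedly passing to `M_{<d}` with `d` the dimension of the previous term gives a chain whose
dimensions strictly decrease until they are `≤ 0`; that term is `H⁰_m(M)`, because a submodule of
dimension `≤ 0` is killed by a power of `m`. Conversely, descending induction shows that every
dimension filtration `D` of length `t` has `D (t - k)` equal to the `k`-th term of this chain, and
as `D 0 = H⁰_m(M)` the length is forced as well.
-/

open Order in
theorem Order.krullDim_union_le_of_isUpperSet {α : Type*} [Preorder α] {s t : Set α}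
    (hs : IsUpperSet s) (ht : IsUpperSet t) :
    krullDim ↥(s ∪ t) ≤ max (krullDim s) (krullDim t) := by
  refine iSup_le fun p => ?_
  have length_le : ∀ {u : Set α}, IsUpperSet u → (p.head : α) ∈ u →
      (p.length : WithBot ℕ∞) ≤ krullDim u := fun hu hhead =>
    LTSeries.length_le_krullDim
      ⟨p.length, fun i => ⟨p i, hu (p.monotone (Fin.zero_le i)) hhead⟩, p.step⟩
  rcases p.head.2 with h | h
  · exact (length_le hs h).trans (le_max_left _ _)
  · exact (length_le ht h).trans (le_max_right _ _)

section ModuleDimension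

variable {R M : Type*} [CommRing R] [AddCommGroup M] [Module R M]

theorem Module.isUpperSet_support : IsUpperSet (Module.support R M) :=
  fun _ _ h hp => Module.mem_support_mono h hp

theorem Submodule.support_sup_subset (N₁ N₂ : Submodule R M) :
    Module.support R ↥(N₁ ⊔ N₂) ⊆ Module.support R N₁ ∪ Module.support R N₂ := by
  intro p hp
  by_contra h
  simp only [Set.mem_union, not_or, Module.notMem_support_iff'] at h
  obtain ⟨⟨_, hx⟩, hx'⟩ := Module.mem_support_iff'.mp hp
  obtain ⟨y, hy, z, hz, rfl⟩ := Submodule.mem_sup.mp hx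
  obtain ⟨r, hr, hry⟩ := h.1 ⟨y, hy⟩
  obtain ⟨s, hs, hsz⟩ := h.2 ⟨z, hz⟩
  refine hx' (r * s) (p.asIdeal.primeCompl.mul_mem hr hs) (Subtype.ext ?_)
  have hry : r • y = 0 := congrArg Subtype.val hry
  have hsz : s • z = 0 := congrArg Subtype.val hsz
  simp [smul_add, mul_smul, smul_comm r s, hry, hsz]

theorem mDim_mono {N N' : Submodule R M} (h : N ≤ N') : mDim R N ≤ mDim R N' :=
  Module.supportDim_le_of_injective _ (Submodule.inclusion_injective h)

theorem mDim_bot : mDim R (⊥ : Submodule R M) = ⊥ :=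
  Module.supportDim_eq_bot_of_subsingleton R _

theorem mDim_sup_le (N₁ N₂ : Submodule R M) :
    mDim R ↥(N₁ ⊔ N₂) ≤ max (mDim R N₁) (mDim R N₂) :=
  (Order.krullDim_le_of_strictMono (Set.inclusion (Submodule.support_sup_subset N₁ N₂))
    fun _ _ h => h).trans
    (Order.krullDim_union_le_of_isUpperSet Module.isUpperSet_support Module.isUpperSet_support)

theorem mDim_nonpos_iff_support_subset [IsLocalRing R] :
    mDim R M ≤ 0 ↔ Module.support R M ⊆ {closedPoint R} := by
  constructor
  · intro h p hp
    have hle : p ≤ closedPoint R := le_maximalIdeal p.2.ne_top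
    have hm : closedPoint R ∈ Module.support R M := Module.mem_support_mono hle hp
    have hmax := Order.krullDim_nonpos_iff_forall_isMax.mp h ⟨p, hp⟩
    exact hle.antisymm (hmax (show (⟨p, hp⟩ : Module.support R M) ≤ ⟨_, hm⟩ from hle))
  · intro h
    have : Subsingleton (Module.support R M) := (Set.subsingleton_singleton.anti h).coe_sort
    exact Order.krullDim_nonpos_of_subsingleton

theorem mDim_nonpos_iff_exists_pow_le_annihilator [IsNoetherianRing R] [IsLocalRing R]
    [Module.Finite R M] :
    mDim R M ≤ 0 ↔ ∃ n, maximalIdeal R ^ n ≤ Module.annihilator R M := by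
  rw [mDim_nonpos_iff_support_subset, Module.support_eq_zeroLocus, closedPoint,
    ← PrimeSpectrum.zeroLocus_eq_singleton, PrimeSpectrum.zeroLocus_subset_zeroLocus_iff]
  exact ⟨fun h => Ideal.exists_pow_le_of_le_radical_of_fg h (IsNoetherian.noetherian _),
    fun ⟨n, hn⟩ r hr => ⟨n, hn (Ideal.pow_mem_pow hr n)⟩⟩

theorem mDim_span_singleton_nonpos_iff [IsNoetherianRing R] [IsLocalRing R] (x : M) :
    mDim R (Submodule.span R {x}) ≤ 0 ↔ ∃ n : ℕ, ∀ r ∈ maximalIdeal R ^ n, r • x = 0 := by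
  rw [mDim_nonpos_iff_exists_pow_le_annihilator]
  exact exists_congr fun _ => forall₂_congr fun r _ =>
    Submodule.mem_annihilator_span_singleton x r

end ModuleDimension

section DimFiltration

variable (R M : Type*) [CommRing R] [AddCommGroup M] [Module R M]

noncomputable def submoduleDimLT (d : WithBot ℕ∞) : Submodule R M :=
  sSup {N | mDim R N < d}

/-- `dimFiltrationRev R M k` is the term `D (t - k)` of the dimension filtration `D` of length `t`
(see `IsDimFiltration.eq_dimFiltrationRev`). -/
noncomputable def dimFiltrationRev : ℕ → Submodule R M
  | 0 => ⊤
  | k + 1 => submoduleDimLT R M (mDim R (dimFiltrationRev k))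

variable {R M}

theorem le_submoduleDimLT {N : Submodule R M} {d : WithBot ℕ∞} (h : mDim R N < d) :
    N ≤ submoduleDimLT R M d :=
  le_sSup h

theorem submoduleDimLT_mono {d d' : WithBot ℕ∞} (h : d ≤ d') :
    submoduleDimLT R M d ≤ submoduleDimLT R M d' :=
  sSup_le_sSup fun _ hN => lt_of_lt_of_le hN h

theorem mDim_submoduleDimLT_lt [IsNoetherian R M] {d : WithBot ℕ∞} (hd : ⊥ < d) :
    mDim R (submoduleDimLT R M d) < d := by
  have hsupClosed : SupClosed {N : Submodule R M | mDim R N < d} := fun _ h₁ _ h₂ =>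
    (mDim_sup_le _ _).trans_lt (max_lt h₁ h₂)
  exact CompleteLattice.WellFoundedGT.isSupClosedCompact _ inferInstance _
    ⟨⊥, show mDim R (⊥ : Submodule R M) < d by rwa [mDim_bot]⟩ hsupClosed

theorem dimFiltrationRev_succ_le (k : ℕ) :
    dimFiltrationRev R M (k + 1) ≤ dimFiltrationRev R M k := by
  induction k with
  | zero => exact le_top
  | succ k ih => exact submoduleDimLT_mono (mDim_mono ih)

theorem antitone_dimFiltrationRev : Antitone (dimFiltrationRev R M) :=
  antitone_nat_of_succ_le dimFiltrationRev_succ_le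

theorem le_dimFiltrationRev_succ {N : Submodule R M} {k : ℕ}
    (h : mDim R N < mDim R (dimFiltrationRev R M k)) : N ≤ dimFiltrationRev R M (k + 1) :=
  le_submoduleDimLT h

theorem mDim_dimFiltrationRev_succ_lt [IsNoetherian R M] {k : ℕ}
    (h : ⊥ < mDim R (dimFiltrationRev R M k)) :
    mDim R (dimFiltrationRev R M (k + 1)) < mDim R (dimFiltrationRev R M k) :=
  mDim_submoduleDimLT_lt h

theorem exists_mDim_dimFiltrationRev_nonpos [IsNoetherian R M] :
    ∃ k, mDim R (dimFiltrationRev R M k) ≤ 0 := by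
  by_contra! hpos
  obtain ⟨k, hk⟩ := WellFounded.not_rel_apply_succ (r := (· < ·))
    fun k => mDim R (dimFiltrationRev R M k)
  exact hk (mDim_dimFiltrationRev_succ_lt (bot_lt_of_lt (hpos k)))

theorem isDimFiltration_dimFiltrationRev [IsNoetherianRing R] [IsLocalRing R] [Module.Finite R M]
    {t : ℕ} (ht : mDim R (dimFiltrationRev R M t) ≤ 0)
    (hpos : ∀ k < t, 0 < mDim R (dimFiltrationRev R M k)) :
    IsDimFiltration R M t fun i => dimFiltrationRev R M (t - i) := by
  refine ⟨by simp [dimFiltrationRev], fun x => ?_, fun i hi => ?_, fun i hi N _ hlt => ?_⟩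
  · dsimp only
    rw [Nat.sub_zero, ← mDim_span_singleton_nonpos_iff]
    refine ⟨fun hx => (mDim_mono ((Submodule.span_singleton_le_iff_mem x _).mpr hx)).trans ht,
      fun hx => ?_⟩
    obtain _ | s := t
    · trivial
    · exact (Submodule.span_singleton_le_iff_mem x _).mp
        (le_dimFiltrationRev_succ (hx.trans_lt (hpos s s.lt_succ_self)))
  · show mDim R (dimFiltrationRev R M (t - i)) < mDim R (dimFiltrationRev R M (t - (i + 1)))
    rw [show t - i = t - (i + 1) + 1 by omega]
    exact mDim_dimFiltrationRev_succ_lt (bot_lt_of_lt (hpos _ (by omega)))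
  · show N ≤ dimFiltrationRev R M (t - i)
    rw [show t - i = t - (i + 1) + 1 by omega]
    exact le_dimFiltrationRev_succ hlt

namespace IsDimFiltration

variable [IsLocalRing R] [IsNoetherian R M] {t t' : ℕ} {D D' : ℕ → Submodule R M}

theorem eq_dimFiltrationRev (hD : IsDimFiltration R M t D) {k : ℕ} (hk : k ≤ t) :
    D (t - k) = dimFiltrationRev R M k := by
  obtain ⟨htop, -, hdim, hmax⟩ := hD
  induction k with
  | zero => exact htop
  | succ k ih =>
    have hsucc : t - (k + 1) + 1 = t - k := by omega
    have hlt : mDim R (D (t - (k + 1))) < mDim R (dimFiltrationRev R M k) := by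
      rw [← ih (by omega), ← hsucc]
      exact hdim _ (by omega)
    refine le_antisymm (le_dimFiltrationRev_succ hlt) (hmax _ (by omega) _ ?_ ?_)
    · rw [hsucc, ih (by omega)]
      exact dimFiltrationRev_succ_le k
    · rw [hsucc, ih (by omega)]
      exact mDim_dimFiltrationRev_succ_lt (bot_lt_of_lt hlt)

theorem mDim_dimFiltrationRev_succ_lt (hD : IsDimFiltration R M t D) {k : ℕ} (hk : k < t) :
    mDim R (dimFiltrationRev R M (k + 1)) < mDim R (dimFiltrationRev R M k) := by
  have h := hD.2.2.1 (t - (k + 1)) (by omega)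
  rwa [hD.eq_dimFiltrationRev hk, show t - (k + 1) + 1 = t - k by omega,
    hD.eq_dimFiltrationRev hk.le] at h

theorem bot_eq (hD : IsDimFiltration R M t D) : D 0 = dimFiltrationRev R M t := by
  simpa only [Nat.sub_self] using hD.eq_dimFiltrationRev le_rfl

theorem length_le (hD : IsDimFiltration R M t D) (hD' : IsDimFiltration R M t' D') : t ≤ t' := by
  by_contra! hlt
  have hbot : D' 0 = D 0 := Submodule.ext fun x => (hD'.2.1 x).trans (hD.2.1 x).symm
  have heq : dimFiltrationRev R M t' = dimFiltrationRev R M t := by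
    rw [← hD.bot_eq, ← hD'.bot_eq, hbot]
  have hmono := mDim_mono (antitone_dimFiltrationRev (R := R) (M := M) hlt.nat_succ_le)
  rw [← heq] at hmono
  exact (hmono.trans_lt (hD.mDim_dimFiltrationRev_succ_lt hlt)).false

end IsDimFiltration

end DimFiltration

/-- existence and uniqueness of the dimension filtration. -/
theorem stmt2 {R M : Type*} [CommRing R] [IsNoetherianRing R] [IsLocalRing R]
    [AddCommGroup M] [Module R M] [Module.Finite R M] :
    ∃ (t : ℕ) (D : ℕ → Submodule R M), IsDimFiltration R M t D ∧
      ∀ (t' : ℕ) (D' : ℕ → Submodule R M), IsDimFiltration R M t' D' →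
        t' = t ∧ ∀ i ≤ t, D' i = D i := by
  classical
  have hex := exists_mDim_dimFiltrationRev_nonpos (R := R) (M := M)
  have hD := isDimFiltration_dimFiltrationRev (Nat.find_spec hex)
    fun k hk => not_le.mp (Nat.find_min hex hk)
  refine ⟨_, _, hD, fun t' D' hD' => ?_⟩
  obtain rfl : t' = Nat.find hex := le_antisymm (hD'.length_le hD) (hD.length_le hD')
  refine ⟨rfl, fun i hi => ?_⟩
  simpa only [Nat.sub_sub_self hi] using hD'.eq_dimFiltrationRev (Nat.sub_le _ i)
end

section
/- Let M be a finitely generated module over a Noetherian local ring with dimension filtration D_0 ⊂ D_1 ⊂ … ⊂ D_t = M. Then for each i ≥ 1, every associated prime of D_i/D_{i-1} is of maximal dimension, i.e., Ass(D_i/D_{i-1}) = Assh(D_i/D_{i-1}) = {p ∈ Ass(D_i/D_{i-1}) : dim R/p = dim(D_i/D_{i-1})}. -/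
/-! A prime `p` associated to `Q = D_i / D_{i-1}` is `√(ann x)` for some `x ≠ 0` in `Q`, so
`R ∙ x ≅ R / ann x` has dimension `dim R/p ≤ dim Q ≤ dim D_i`. The preimage of `R ∙ x` in
`D_i` is an extension of `R ∙ x` by a submodule of `D_{i-1}`; since supports are closed under
specialization, its dimension is the larger of the two. So if `dim R/p < dim D_i`, this
preimage has dimension `< dim D_i` and lies in `D_{i-1}` by maximality, forcing `x = 0`. -/

open IsLocalRing

open Order

theorem Order.krullDim_union_le_max_of_isUpperSet {α : Type*} [Preorder α] {A B : Set α}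
    (hA : IsUpperSet A) (hB : IsUpperSet B) :
    krullDim ↥(A ∪ B) ≤ max (krullDim A) (krullDim B) := by
  refine iSup_le fun c ↦ ?_
  have length_le {U : Set α} (hU : IsUpperSet U) (h : (c.head : α) ∈ U) :
      (c.length : WithBot ℕ∞) ≤ krullDim U :=
    LTSeries.length_le_krullDim
      ⟨c.length, fun j ↦ ⟨c j, hU (c.monotone (Fin.zero_le j)) h⟩, c.step⟩
  rcases c.head.2 with h | h
  exacts [le_max_of_le_left (length_le hA h), le_max_of_le_right (length_le hB h)]

namespace Module

variable {R M N P : Type*} [CommRing R] [AddCommGroup M] [Module R M]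
  [AddCommGroup N] [Module R N] [AddCommGroup P] [Module R P]

theorem isUpperSet_support_s5 : IsUpperSet (support R M) :=
  fun _ _ h hp ↦ mem_support_mono h hp

theorem supportDim_eq_max_of_exact {f : M →ₗ[R] N} {g : N →ₗ[R] P} (h : Function.Exact f g)
    (hf : Function.Injective f) (hg : Function.Surjective g) :
    supportDim R N = max (supportDim R M) (supportDim R P) := by
  refine le_antisymm ?_
    (max_le (supportDim_le_of_injective f hf) (supportDim_le_of_surjective g hg))
  rw [supportDim, support_of_exact h hf hg]
  exact krullDim_union_le_max_of_isUpperSet isUpperSet_support_s5 isUpperSet_support_s5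

theorem supportDim_comap_mkQ (P : Submodule R M) (C : Submodule R (M ⧸ P)) :
    supportDim R (C.comap P.mkQ) = max (supportDim R P) (supportDim R C) := by
  have hP : P ≤ C.comap P.mkQ := fun x hx ↦ by simp [(Submodule.Quotient.mk_eq_zero P).mpr hx]
  refine supportDim_eq_max_of_exact (f := Submodule.inclusion hP)
    (g := P.mkQ.restrict fun _ hx ↦ hx) ?_ (Submodule.inclusion_injective hP) ?_
  · rintro ⟨x, hx⟩
    simp [Subtype.ext_iff, Submodule.Quotient.mk_eq_zero]
  · rintro ⟨c, hc⟩
    obtain ⟨x, rfl⟩ := P.mkQ_surjective c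
    exact ⟨⟨x, hc⟩, rfl⟩

theorem exists_ne_zero_supportDim_span_singleton_of_isAssociatedPrime {p : Ideal R}
    (hp : IsAssociatedPrime p M) :
    ∃ x : M, x ≠ 0 ∧ supportDim R (R ∙ x) = ringKrullDim (R ⧸ p) := by
  obtain ⟨hprime, x, rfl⟩ := hp
  refine ⟨x, ?_, ?_⟩
  · rintro rfl
    exact hprime.ne_top (by simp)
  · have hann : annihilator R (R ∙ x) = (⊥ : Submodule R M).colon {x} := by
      ext r
      simp [Submodule.mem_colon_singleton]
    rw [supportDim_eq_ringKrullDim_quotient_annihilator, hann, ringKrullDim_quotient,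
      ringKrullDim_quotient, PrimeSpectrum.zeroLocus_radical]

end Module

section DimensionFiltration

open Module

variable {R M : Type*} [CommRing R] [AddCommGroup M] [Module R M] {A B : Submodule R M}

theorem supportDim_le_supportDim_of_ne_bot (hAB : supportDim R A < supportDim R B)
    (hmax : ∀ N ≤ B, supportDim R N < supportDim R B → N ≤ A)
    {C : Submodule R (B ⧸ A.comap B.subtype)} (hC : C ≠ ⊥) :
    supportDim R B ≤ supportDim R C := by
  by_contra! hC_lt
  have hcomap : supportDim R (A.comap B.subtype) ≤ supportDim R A :=
    supportDim_le_of_injective (B.subtype.restrict fun _ hx ↦ hx)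
      fun _ _ h ↦ Subtype.ext (B.injective_subtype congr(($h : M)))
  let N : Submodule R M := (C.comap (A.comap B.subtype).mkQ).map B.subtype
  have hN : supportDim R N < supportDim R B := by
    rw [← supportDim_eq_of_equiv (Submodule.equivMapOfInjective _ B.injective_subtype _),
      supportDim_comap_mkQ]
    exact max_lt (hcomap.trans_lt hAB) hC_lt
  have hNA : N ≤ A := hmax N (Submodule.map_subtype_le _ _) hN
  refine hC (eq_bot_iff.mpr fun c hc ↦ ?_)
  obtain ⟨y, rfl⟩ := (A.comap B.subtype).mkQ_surjective c
  exact (Submodule.Quotient.mk_eq_zero _).mpr (hNA ⟨y, hc, rfl⟩)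

theorem ringKrullDim_quotient_eq_supportDim_of_mem_associatedPrimes
    (hAB : supportDim R A < supportDim R B)
    (hmax : ∀ N ≤ B, supportDim R N < supportDim R B → N ≤ A) {p : Ideal R}
    (hp : p ∈ associatedPrimes R (B ⧸ A.comap B.subtype)) :
    ringKrullDim (R ⧸ p) = supportDim R (B ⧸ A.comap B.subtype) := by
  obtain ⟨x, hx, hdim⟩ := exists_ne_zero_supportDim_span_singleton_of_isAssociatedPrime hp
  rw [← hdim]
  refine le_antisymm (supportDim_le_of_injective _ (Submodule.injective_subtype _)) ?_
  calc supportDim R (B ⧸ A.comap B.subtype)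
      ≤ supportDim R B := supportDim_le_of_surjective _ (Submodule.mkQ_surjective _)
    _ ≤ supportDim R (R ∙ x) :=
      supportDim_le_supportDim_of_ne_bot hAB hmax (by simpa using hx)

end DimensionFiltration

theorem stmt5_general {R M : Type*} [CommRing R] [IsLocalRing R]
    [AddCommGroup M] [Module R M]
    (t : ℕ) (D : ℕ → Submodule R M) (hD : IsDimFiltration R M t D) :
    ∀ i, 1 ≤ i → i ≤ t →
      ∀ p ∈ associatedPrimes R (↥(D i) ⧸ (D (i - 1)).comap (D i).subtype),
        ringKrullDim (R ⧸ p) = mDim R (↥(D i) ⧸ (D (i - 1)).comap (D i).subtype) := by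
  rintro i hi hit p hp
  obtain ⟨j, rfl⟩ : ∃ j, i = j + 1 := ⟨i - 1, by omega⟩
  have hj : j < t := by omega
  rw [Nat.add_sub_cancel] at hp ⊢
  exact ringKrullDim_quotient_eq_supportDim_of_mem_associatedPrimes
    (hD.2.2.1 j hj) (hD.2.2.2 j hj) hp

/-- every associated prime of `D i / D (i-1)` has maximal dimension, i.e.
`Ass (D i / D (i-1)) = Assh (D i / D (i-1))`. -/
theorem stmt5 {R M : Type*} [CommRing R] [IsNoetherianRing R] [IsLocalRing R]
    [AddCommGroup M] [Module R M] [Module.Finite R M]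
    (t : ℕ) (D : ℕ → Submodule R M) (hD : IsDimFiltration R M t D) :
    ∀ i, 1 ≤ i → i ≤ t →
      ∀ p ∈ associatedPrimes R (↥(D i) ⧸ (D (i - 1)).comap (D i).subtype),
        ringKrullDim (R ⧸ p) = mDim R (↥(D i) ⧸ (D (i - 1)).comap (D i).subtype) :=
  stmt5_general t D hD
end

section
/- Let R be a Noetherian local ring, M a finitely generated R-module of dimension d, x = x_1, …, x_d a system of parameters of M. Then for all positive integers n_1, …, n_d, ℓ(M/(x_1^{n_1},…,x_d^{n_d})M) − n_1⋯n_d · e(x; M) ≤ n_1⋯n_d · ( ℓ(M/(x_1,…,x_d)M) − e(x; M) ). -/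
open IsLocalRing

/-!
Subtracting the common term `n₁⋯n_d · e`, the claim is
`ℓ(M/(x₁^{n₁},…,x_d^{n_d})M) ≤ n₁⋯n_d · ℓ(M/(x₁,…,x_d)M)`. Raising one element at a time to its
power and passing to `M/IM`, where `I` is generated by the other elements, it suffices to show
`ℓ(M/y^kM) ≤ k · ℓ(M/yM)`. This follows by induction on `k` from the exact sequence
`M/yM → M/y^{k+1}M → M/y^kM → 0`, whose first map is multiplication by `y^k`.
-/

open Submodule in
theorem Module.length_le_add_of_exact {R N M P : Type*} [Ring R] [AddCommGroup N] [Module R N]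
    [AddCommGroup M] [Module R M] [AddCommGroup P] [Module R P]
    (f : N →ₗ[R] M) (g : M →ₗ[R] P) (hg : Function.Surjective g) (H : Function.Exact f g) :
    Module.length R M ≤ Module.length R N + Module.length R P := by
  rw [Module.length_eq_add_of_exact (LinearMap.range f).subtype g (injective_subtype _) hg
    (by rw [LinearMap.exact_iff, range_subtype, LinearMap.exact_iff.mp H])]
  gcongr
  exact Module.length_le_of_surjective f.rangeRestrict f.surjective_rangeRestrict

theorem eLength_eq_length (R M : Type*) [Ring R] [AddCommGroup M] [Module R M] :
    eLength R M = Module.length R M := by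
  rw [eLength, ← Module.coe_length, WithBot.unbotD_coe]

section

variable {R M : Type*} [CommRing R] [AddCommGroup M] [Module R M]

open Pointwise Submodule in
theorem length_quotient_span_pow_succ_smul_le (y : R) (k : ℕ) :
    Module.length R (M ⧸ Ideal.span {y ^ (k + 1)} • (⊤ : Submodule R M)) ≤
      Module.length R (M ⧸ Ideal.span {y} • (⊤ : Submodule R M)) +
        Module.length R (M ⧸ Ideal.span {y ^ k} • (⊤ : Submodule R M)) := by
  rw [ideal_span_singleton_smul, ideal_span_singleton_smul, ideal_span_singleton_smul]
  have mem (r : R) (m : M) : m ∈ r • (⊤ : Submodule R M) ↔ ∃ m', r • m' = m := by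
    simp [mem_smul_pointwise_iff_exists]
  have hle : y ^ (k + 1) • (⊤ : Submodule R M) ≤ y ^ k • ⊤ := by
    intro _ h
    obtain ⟨m, rfl⟩ := (mem _ _).mp h
    exact (mem _ _).mpr ⟨y • m, by rw [pow_succ, mul_smul]⟩
  refine Module.length_le_add_of_exact ((y • (⊤ : Submodule R M)).liftQ
    ((y ^ (k + 1) • (⊤ : Submodule R M)).mkQ ∘ₗ LinearMap.lsmul R M (y ^ k)) ?_) (factor hle)
    (factor_surjective hle) ?_
  · intro _ h
    obtain ⟨m, rfl⟩ := (mem _ _).mp h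
    simp only [LinearMap.mem_ker, LinearMap.comp_apply, LinearMap.lsmul_apply, mkQ_apply,
      Quotient.mk_eq_zero]
    exact (mem _ _).mpr ⟨m, by rw [smul_smul, ← pow_succ]⟩
  · intro q
    induction q using Submodule.Quotient.induction_on with | _ m
    rw [← mkQ_apply, factor_mk, mkQ_apply, Submodule.Quotient.mk_eq_zero, mem]
    constructor
    · rintro ⟨m', rfl⟩
      exact ⟨Submodule.Quotient.mk m', rfl⟩
    · rintro ⟨q', hq'⟩
      induction q' using Submodule.Quotient.induction_on with | _ m'
      obtain ⟨m'', h⟩ := (mem _ _).mp (hle ((Submodule.Quotient.eq _).mp hq'))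
      exact ⟨m' - m'', by rw [smul_sub, h, LinearMap.lsmul_apply, sub_sub_cancel]⟩

theorem length_quotient_span_pow_smul_le (y : R) (k : ℕ) :
    Module.length R (M ⧸ Ideal.span {y ^ k} • (⊤ : Submodule R M)) ≤
      k * Module.length R (M ⧸ Ideal.span {y} • (⊤ : Submodule R M)) := by
  induction k with
  | zero =>
    rw [pow_zero, Ideal.span_singleton_one, Submodule.top_smul, Module.length_eq_zero]
    exact zero_le
  | succ k ih =>
    calc _ ≤ Module.length R (M ⧸ Ideal.span {y} • (⊤ : Submodule R M)) +
          Module.length R (M ⧸ Ideal.span {y ^ k} • (⊤ : Submodule R M)) :=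
          length_quotient_span_pow_succ_smul_le y k
      _ ≤ _ := by
        rw [Nat.cast_succ, add_one_mul, add_comm]
        gcongr

open Submodule in
theorem length_quotient_sup_smul_top (I J : Ideal R) :
    Module.length R (M ⧸ (I ⊔ J) • (⊤ : Submodule R M)) =
      Module.length R ((M ⧸ I • (⊤ : Submodule R M)) ⧸
        J • (⊤ : Submodule R (M ⧸ I • (⊤ : Submodule R M)))) := by
  have hJ : (J • ⊤ : Submodule R M).map (I • ⊤ : Submodule R M).mkQ = J • ⊤ := by
    rw [map_smul'', Submodule.map_top, range_mkQ]
  rw [← hJ, (quotientQuotientEquivQuotientSup _ _).length_eq, sup_smul]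

theorem length_quotient_sup_span_pow_smul_le (I : Ideal R) (y : R) (k : ℕ) :
    Module.length R (M ⧸ (I ⊔ Ideal.span {y ^ k}) • (⊤ : Submodule R M)) ≤
      k * Module.length R (M ⧸ (I ⊔ Ideal.span {y}) • (⊤ : Submodule R M)) := by
  rw [length_quotient_sup_smul_top, length_quotient_sup_smul_top]
  exact length_quotient_span_pow_smul_le y k

theorem Ideal.span_range_eq_span_image_compl_sup {ι : Type*} (z : ι → R) (a : ι) :
    Ideal.span (Set.range z) = Ideal.span (z '' {a}ᶜ) ⊔ Ideal.span {z a} := by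
  rw [← Ideal.span_union, ← Set.image_singleton, ← Set.image_union, Set.compl_union_self,
    Set.image_univ]

theorem length_quotient_span_range_ite_pow_le {ι : Type*} [DecidableEq ι] (x : ι → R)
    (n : ι → ℕ) (s : Finset ι) :
    Module.length R (M ⧸ Ideal.span (Set.range fun j => if j ∈ s then x j ^ n j else x j) •
        (⊤ : Submodule R M)) ≤
      (∏ j ∈ s, n j : ℕ) *
        Module.length R (M ⧸ Ideal.span (Set.range x) • (⊤ : Submodule R M)) := by
  induction s using Finset.induction_on with
  | empty =>
    have hx : (fun j => if j ∈ (∅ : Finset ι) then x j ^ n j else x j) = x := by simp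
    rw [hx, Finset.prod_empty, Nat.cast_one, one_mul]
  | insert a s ha ih =>
    set z := fun j => if j ∈ s then x j ^ n j else x j
    set z' := fun j => if j ∈ insert a s then x j ^ n j else x j
    have hz : z' '' {a}ᶜ = z '' {a}ᶜ :=
      Set.image_congr fun j hj => by simp [z, z', Set.mem_compl_singleton_iff.mp hj]
    have hza : z a = x a := if_neg ha
    have hz'a : z' a = x a ^ n a := if_pos (Finset.mem_insert_self a s)
    calc _ = Module.length R (M ⧸ (Ideal.span (z '' {a}ᶜ) ⊔ Ideal.span {x a ^ n a}) •
          (⊤ : Submodule R M)) := by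
          rw [Ideal.span_range_eq_span_image_compl_sup _ a, hz, hz'a]
      _ ≤ n a * Module.length R (M ⧸ (Ideal.span (z '' {a}ᶜ) ⊔ Ideal.span {x a}) •
          (⊤ : Submodule R M)) := length_quotient_sup_span_pow_smul_le _ _ _
      _ = n a * Module.length R (M ⧸ Ideal.span (Set.range z) • (⊤ : Submodule R M)) := by
          rw [Ideal.span_range_eq_span_image_compl_sup z a, hza]
      _ ≤ _ := by
          rw [Finset.prod_insert ha, Nat.cast_mul, mul_assoc]
          gcongr

theorem length_quotient_span_range_pow_le {ι : Type*} [Fintype ι] (x : ι → R) (n : ι → ℕ) :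
    Module.length R (M ⧸ Ideal.span (Set.range fun j => x j ^ n j) • (⊤ : Submodule R M)) ≤
      (∏ j, n j : ℕ) * Module.length R (M ⧸ Ideal.span (Set.range x) • (⊤ : Submodule R M)) := by
  classical
  have hx : (fun j => if j ∈ Finset.univ then x j ^ n j else x j) = fun j => x j ^ n j := by
    simp
  rw [← hx]
  exact length_quotient_span_range_ite_pow_le x n Finset.univ

end

open Filter

theorem stmt17_general {R M : Type*} [CommRing R] [IsLocalRing R]
    [AddCommGroup M] [Module R M]
    (d : ℕ) (x : Fin d → R) (hx : IsSOP R M d x)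
    (e : ℕ) :
    ∀ nn : Fin d → ℕ, (∀ j, 1 ≤ nn j) →
      ((eLength R (M ⧸ (Ideal.span (Set.range (fun j => x j ^ nn j)) •
          (⊤ : Submodule R M)))).toNat : ℤ) - (∏ j, (nn j : ℤ)) * e ≤
        (∏ j, (nn j : ℤ)) *
          (((eLength R (M ⧸ (Ideal.span (Set.range x) • (⊤ : Submodule R M)))).toNat : ℤ) - e) := by
  intro nn _
  have hfin : Module.length R (M ⧸ Ideal.span (Set.range x) • (⊤ : Submodule R M)) ≠ ⊤ :=
    Module.length_ne_top_iff.mpr hx.2.2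
  have hle : (eLength R (M ⧸ Ideal.span (Set.range fun j => x j ^ nn j) •
      (⊤ : Submodule R M))).toNat ≤
        (∏ j, nn j) * (eLength R (M ⧸ Ideal.span (Set.range x) • (⊤ : Submodule R M))).toNat := by
    rw [eLength_eq_length, eLength_eq_length, ← ENat.toNat_natCast (∏ j, nn j), ← ENat.toNat_mul]
    exact ENat.toNat_le_toNat (length_quotient_span_range_pow_le x nn)
      (WithTop.mul_ne_top (ENat.natCast_ne_top _) hfin)
  rw [mul_sub, sub_le_sub_iff_right]
  exact_mod_cast hle

/-- for a system of parameters `x` of `M`,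
`ℓ(M/(x_1^{n_1},…,x_d^{n_d})M) − n_1⋯n_d·e(x;M) ≤ n_1⋯n_d·(ℓ(M/xM) − e(x;M))`.
The Serre multiplicity `e` is characterized by `e(x; M) = lim_n ℓ(M/(x_1^n,…,x_d^n)M)/n^d`. -/
theorem stmt17 {R M : Type*} [CommRing R] [IsNoetherianRing R] [IsLocalRing R]
    [AddCommGroup M] [Module R M] [Module.Finite R M]
    (d : ℕ) (x : Fin d → R) (hx : IsSOP R M d x)
    (e : ℕ)
    (he : Tendsto (fun n : ℕ =>
        ((eLength R (M ⧸ (Ideal.span (Set.range (fun j => x j ^ n)) •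
          (⊤ : Submodule R M)))).toNat : ℝ) / (n : ℝ) ^ d)
      atTop (nhds (e : ℝ))) :
    ∀ nn : Fin d → ℕ, (∀ j, 1 ≤ nn j) →
      ((eLength R (M ⧸ (Ideal.span (Set.range (fun j => x j ^ nn j)) •
          (⊤ : Submodule R M)))).toNat : ℤ) - (∏ j, (nn j : ℤ)) * e ≤
        (∏ j, (nn j : ℤ)) *
          (((eLength R (M ⧸ (Ideal.span (Set.range x) • (⊤ : Submodule R M)))).toNat : ℤ) - e) :=
  stmt17_general d x hx e
end
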